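/- Let Γ act on a set S, let F = F(S) be the free group on S with the induced Γ-action by automorphisms, let M be a topological space on which Γ acts properly discontinuously, and let f : S → M be a Γ-equivariant map. Define π : F → M ⊔ {∗} by π(1) = ∗ and π(w) = f(s_1) where s_1^{ε_1} is the first letter of the reduced word w. Give F the topology pulled back along π (where {∗} is isolated in M ⊔ {∗}). Then π is Γ-equivariant and the Γ-action on F ∖ {1} is properly discontinuous: for any compact K ⊆ F, the set {γ ∈ Γ : γK ∩ (K ∖ {1}) ≠ ∅} is finite. -/
import Mathlib

private lemma reduce_map_of_injective {α β : Type*} [DecidableEq α] [DecidableEq β]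
    {g : α → β} (hg : Function.Injective g) (L : List (α × Bool)) :
    FreeGroup.reduce (L.map fun x => (g x.1, x.2)) =
      (FreeGroup.reduce L).map fun x => (g x.1, x.2) := by
  induction L with
  | nil => rfl
  | cons hd tl ih =>
    rw [List.map_cons, FreeGroup.reduce.cons, FreeGroup.reduce.cons, ih]
    cases h : FreeGroup.reduce tl with
    | nil => rfl
    | cons hd2 tl2 =>
      simp only [List.map_cons]
      by_cases hc : hd.1 = hd2.1 ∧ hd.2 = !hd2.2
      · rw [if_pos hc, if_pos ⟨by rw [hc.1], hc.2⟩]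
      · rw [if_neg hc, if_neg (by rintro ⟨h1, h2⟩; exact hc ⟨hg h1, h2⟩)]
        rfl

private lemma toWord_map_of_injective {α β : Type*} [DecidableEq α] [DecidableEq β]
    {g : α → β} (hg : Function.Injective g) (w : FreeGroup α) :
    (FreeGroup.map g w).toWord = w.toWord.map fun x => (g x.1, x.2) := by
  conv_lhs => rw [← FreeGroup.mk_toWord (x := w)]
  rw [FreeGroup.map.mk, FreeGroup.toWord_mk, reduce_map_of_injective hg,
    FreeGroup.reduce_toWord]

/-- The first-letter map `π : F(S) → M ⊔ {∗}` is `Γ`-equivariant and, with the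
topology on `F(S)` pulled back along `π`, the induced `Γ`-action on
`F(S) ∖ {1}` is properly discontinuous. -/
theorem stmt_8 {Γ S M : Type*} [Group Γ] [MulAction Γ S] [DecidableEq S]
    [TopologicalSpace M] [MulAction Γ M] [ContinuousConstSMul Γ M]
    (hPD : ∀ K : Set M, IsCompact K → {γ : Γ | (((γ • ·) '' K) ∩ K).Nonempty}.Finite)
    (f : S → M) (hf : ∀ (γ : Γ) (s : S), f (γ • s) = γ • f s) :
    let π : FreeGroup S → M ⊕ Unit := fun w =>
      match (FreeGroup.toWord w).head? with
      | none => Sum.inr ()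
      | some p => Sum.inl (f p.1)
    let tF : TopologicalSpace (FreeGroup S) := TopologicalSpace.induced π inferInstance
    let act : Γ → FreeGroup S → FreeGroup S := fun γ => FreeGroup.map (γ • ·)
    (∀ (γ : Γ) (w : FreeGroup S), π (act γ w) = Sum.map (γ • ·) id (π w)) ∧
    (∀ K : Set (FreeGroup S), @IsCompact _ tF K →
      {γ : Γ | ((act γ '' K) ∩ (K \ {1})).Nonempty}.Finite) := by
  intro π tF act
  have hinj : ∀ γ : Γ, Function.Injective (γ • · : S → S) :=
    fun γ => MulAction.injective γ
  have hπ : ∀ (γ : Γ) (w : FreeGroup S), π (act γ w) = Sum.map (γ • ·) id (π w) := by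
    intro γ w
    show (match (FreeGroup.toWord (act γ w)).head? with
      | none => Sum.inr ()
      | some p => Sum.inl (f p.1)) = _
    rw [show act γ w = FreeGroup.map (γ • ·) w from rfl,
      toWord_map_of_injective (hinj γ)]
    cases h : w.toWord with
    | nil => simp [π, h]
    | cons hd tl => simp [π, h, hf]
  refine ⟨hπ, ?_⟩
  intro K hK
  -- π is continuous for the induced topology
  have hπcont : @Continuous _ _ tF _ π := continuous_induced_dom
  have hπK : IsCompact (π '' K) := hK.image hπcont
  set C : Set M := Sum.inl ⁻¹' (π '' K) with hC
  have hCcomp : IsCompact C := by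
    have h1 : IsCompact (π '' K ∩ Set.range (Sum.inl : M → M ⊕ Unit)) :=
      hπK.inter_right isClosed_range_inl
    have h2 : Sum.inl '' C = π '' K ∩ Set.range Sum.inl := by
      ext x; constructor
      · rintro ⟨m, hm, rfl⟩; exact ⟨hm, ⟨m, rfl⟩⟩
      · rintro ⟨hx, ⟨m, rfl⟩⟩; exact ⟨m, hx, rfl⟩
    rw [(Topology.IsEmbedding.inl (X := M) (Y := Unit)).isCompact_iff, h2]; exact h1
  apply (hPD C hCcomp).subset
  rintro γ ⟨x, ⟨⟨w, hwK, rfl⟩, hxK, hx1⟩⟩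
  -- act γ w ∈ K, act γ w ≠ 1, w ∈ K
  have hw1 : w ≠ 1 := by
    rintro rfl
    exact hx1 (by simp [act, map_one])
  obtain ⟨hd, tl, hw⟩ : ∃ hd tl, w.toWord = hd :: tl := by
    rcases h : w.toWord with _ | ⟨hd, tl⟩
    · exact absurd (FreeGroup.toWord_eq_nil_iff.mp h) hw1
    · exact ⟨hd, tl, rfl⟩
  have hπw : π w = Sum.inl (f hd.1) := by simp [π, hw]
  have hmem : f hd.1 ∈ C := by
    rw [hC, Set.mem_preimage, ← hπw]; exact ⟨w, hwK, rfl⟩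
  have hmem2 : γ • f hd.1 ∈ C := by
    have := hπ γ w
    rw [hπw] at this
    rw [hC, Set.mem_preimage]
    exact ⟨act γ w, hxK, by rw [this]; rfl⟩
  exact ⟨γ • f hd.1, ⟨f hd.1, hmem, rfl⟩, hmem2⟩
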